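/- Let Ω ⊆ ℝ² be a bounded open set, let c be a Poisson solution on Ω, and suppose the open disc of radius L > 0 centered at P is contained in Ω while Q ∈ ∂Ω satisfies ‖P − Q‖ = L. Let v = (P − Q)/L. Then c(Q + t·v) ≥ (K/(4D))·(2Lt − t²) for every t ∈ [0, L]. Consequently, if the extension of c to the closure of Ω is differentiable at Q, then the directional derivative of c at Q in the direction v is at least (K/(2D))·L, and in particular ‖∇c(Q)‖ ≥ (K/(2D))·L. -/

import Mathlib

open Metric Set Filter
open scoped Matrix RealInnerProductSpace Topology

noncomputable section

/-- The Euclidean plane ℝ². -/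
abbrev E2 := EuclideanSpace ℝ (Fin 2)

/-- The Laplacian `c_xx + c_yy` of a function on the plane. -/
noncomputable def lap (c : E2 → ℝ) (p : E2) : ℝ :=
  ∑ i : Fin 2, fderiv ℝ (fun q => fderiv ℝ c q (EuclideanSpace.single i 1)) p
    (EuclideanSpace.single i 1)

/-- A Poisson solution on a bounded open set `Ω ⊆ ℝ²` (for fixed constants `K, D`):
continuous on the closure of `Ω`, twice continuously differentiable on `Ω`,
satisfying `Δc = -K/D` on `Ω` and `c = 0` on the boundary `∂Ω`. -/
structure IsPoissonSolution (K D : ℝ) (Ω : Set E2) (c : E2 → ℝ) : Prop where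
  contOn : ContinuousOn c (closure Ω)
  smooth : ContDiffOn ℝ 2 c Ω
  eqn : ∀ p ∈ Ω, lap c p = -(K / D)
  bdry : ∀ p ∈ frontier Ω, c p = 0

/-! Compare `c` with the radial barrier `w x = K/(4D) · (L² - ‖x - P‖²)`, which satisfies
`Δw = -K/D` and vanishes on the circle `‖x - P‖ = L`. At an interior minimum the Laplacian is
nonnegative (second-derivative test), which yields the minimum principle: first `c ≥ 0` on
`closure Ω`, and then, `c - w` being harmonic on the disc and nonnegative on its boundary,
`c ≥ w` on the closed disc. On the segment from `Q` towards `P` this is the first bound. Since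
`c - w` attains its minimum `0` over the closed disc at `Q`, its derivative at `Q` in the inward
direction `v` is nonnegative, i.e. `⟪∇c(Q), v⟫ ≥ ⟪∇w(Q), v⟫ = K L / (2D)`. -/

open InnerProductSpace Module
open scoped Laplacian

theorem nonneg_of_isLittleO_sub_sq_mul {g : ℝ → ℝ} {a : ℝ}
    (hg : (fun h => g h - h ^ 2 * a) =o[𝓝[>] 0] fun h => h ^ 2)
    (hpos : ∀ᶠ h in 𝓝[>] 0, 0 ≤ g h) : 0 ≤ a := by
  have hlim : Tendsto (fun h => g h / h ^ 2) (𝓝[>] 0) (𝓝 a) := by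
    have := hg.tendsto_div_nhds_zero.add_const a
    rw [zero_add] at this
    refine this.congr' ?_
    filter_upwards [self_mem_nhdsWithin] with h (hh : 0 < h)
    field_simp
    ring
  refine ge_of_tendsto hlim ?_
  filter_upwards [hpos] with h hh
  positivity

theorem IsLocalMin.iteratedFDeriv_two_nonneg {E : Type*} [NormedAddCommGroup E]
    [NormedSpace ℝ E] {f : E → ℝ} {x : E} (hmin : IsLocalMin f x) (hf : ContDiffAt ℝ 2 f x)
    (e : E) : 0 ≤ iteratedFDeriv ℝ 2 f x ![e, e] := by
  obtain ⟨r, hr, hball⟩ := Metric.eventually_nhds_iff_ball.1 (hf.eventually (by simp))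
  set f'' := fderiv ℝ (fderiv ℝ f) x
  have hf'' : HasFDerivAt (fderiv ℝ f) f'' x :=
    ((hf.fderiv_right (m := 1) le_rfl).differentiableAt one_ne_zero).hasFDerivAt
  -- Along `h ↦ x + h • w` the first-order Taylor term vanishes at the minimum, so
  -- `f (x + h • w) - f x = h² / 2 · f'' w w + o(h²)` is nonnegative.
  have hsmall : ∀ w ∈ ball (0 : E) r, 0 ≤ f'' w w := by
    intro w hw
    have hx : x + 0 ∈ interior (ball x r) := by simpa [isOpen_ball.interior_eq] using hr
    have hxw : x + 0 + w ∈ interior (ball x r) := by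
      simpa [isOpen_ball.interior_eq, mem_ball_iff_norm] using hw
    have htaylor := (convex_ball x r).taylor_approx_two_segment
      (fun y hy => ((hball y (interior_subset hy)).differentiableAt two_ne_zero).hasFDerivAt)
      (mem_ball_self hr) hf''.hasFDerivWithinAt hx hxw
    simp only [smul_zero, add_zero, map_zero, zero_apply, smul_eq_mul,
      hmin.fderiv_eq_zero, mul_zero, sub_zero] at htaylor
    suffices 0 ≤ f'' w w / 2 by linarith
    refine nonneg_of_isLittleO_sub_sq_mul (g := fun h => f (x + h • w) - f x)
      (htaylor.congr_left fun h => by ring) ?_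
    have hline : Tendsto (fun h : ℝ => x + h • w) (𝓝[>] 0) (𝓝 x) := by
      have : Continuous fun h : ℝ => x + h • w := by fun_prop
      simpa using (this.tendsto 0).mono_left nhdsWithin_le_nhds
    filter_upwards [hline.eventually hmin] with h hh
    linarith
  set t := r / (‖e‖ + r)
  have ht : 0 < t := by positivity
  have hte : t • e ∈ ball (0 : E) r := by
    rw [mem_ball_zero_iff, norm_smul, Real.norm_of_nonneg ht.le, div_mul_eq_mul_div,
      div_lt_iff₀ (by positivity)]
    nlinarith [norm_nonneg e]
  have := hsmall _ hte
  simp only [map_smul, smul_apply, smul_eq_mul] at this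
  rw [mul_nonneg_iff_of_pos_left ht, mul_nonneg_iff_of_pos_left ht] at this
  simpa [iteratedFDeriv_two_apply] using this

section Laplacian

variable {E : Type*} [NormedAddCommGroup E] [InnerProductSpace ℝ E] [FiniteDimensional ℝ E]

theorem IsLocalMin.laplacian_nonneg {f : E → ℝ} {x : E} (hmin : IsLocalMin f x)
    (hf : ContDiffAt ℝ 2 f x) : 0 ≤ Δ f x := by
  rw [laplacian_eq_iteratedFDeriv_stdOrthonormalBasis]
  exact Finset.sum_nonneg fun i _ => hmin.iteratedFDeriv_two_nonneg hf _

theorem laplacian_norm_sub_sq (P x : E) : Δ (fun y => ‖y - P‖ ^ 2) x = 2 * finrank ℝ E := by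
  set B : E →L[ℝ] E →L[ℝ] ℝ := 2 • innerSL ℝ
  have hfd : fderiv ℝ (fun y => ‖y - P‖ ^ 2) = fun y => B (y - P) := by
    ext1 y
    simpa [B] using ((hasFDerivAt_id y).sub_const P).norm_sq.fderiv
  have hfd2 : HasFDerivAt (fun y => B (y - P)) B x :=
    (B.hasFDerivAt.comp x ((hasFDerivAt_id x).sub_const P)).congr_fderiv B.comp_id
  have hB : ∀ e, B e e = 2 * ‖e‖ ^ 2 := fun e => by
    simp only [B, FunLike.coe_smul, Pi.smul_apply, nsmul_eq_mul, Nat.cast_ofNat]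
    exact congrArg (2 * ·) (real_inner_self_eq_norm_sq e)
  rw [laplacian_eq_iteratedFDeriv_stdOrthonormalBasis]
  simp only [iteratedFDeriv_two_apply, hfd, hfd2.fderiv, Matrix.cons_val_zero,
    Matrix.cons_val_one, hB]
  simp [mul_comm]

theorem le_of_forall_mem_frontier_le_of_laplacian_neg {U : Set E} (hU : IsOpen U)
    (hUb : Bornology.IsBounded U) {u : E → ℝ} (hcont : ContinuousOn u (closure U))
    (hsm : ContDiffOn ℝ 2 u U) (hΔ : ∀ x ∈ U, Δ u x < 0) {m : ℝ}
    (hm : ∀ x ∈ frontier U, m ≤ u x) : ∀ x ∈ closure U, m ≤ u x := by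
  rcases U.eq_empty_or_nonempty with rfl | hne
  · simp
  obtain ⟨x₀, hx₀, hmin⟩ := hUb.isCompact_closure.exists_isMinOn hne.closure hcont
  have hx₀U : x₀ ∉ U := fun hx₀U => (hΔ x₀ hx₀U).not_ge <|
    IsLocalMin.laplacian_nonneg
      (Filter.mem_of_superset (hU.mem_nhds hx₀U) fun y hy => hmin (subset_closure hy))
      ((hsm x₀ hx₀U).contDiffAt (hU.mem_nhds hx₀U))
  have hx₀f : x₀ ∈ frontier U := ⟨hx₀, by rwa [hU.interior_eq]⟩
  exact fun x hx => (hm x₀ hx₀f).trans (hmin hx)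

theorem le_of_forall_mem_frontier_le_of_laplacian_nonpos [Nontrivial E] {U : Set E}
    (hU : IsOpen U) (hUb : Bornology.IsBounded U) {u : E → ℝ}
    (hcont : ContinuousOn u (closure U)) (hsm : ContDiffOn ℝ 2 u U) (hΔ : ∀ x ∈ U, Δ u x ≤ 0)
    {m : ℝ} (hm : ∀ x ∈ frontier U, m ≤ u x) : ∀ x ∈ closure U, m ≤ u x := by
  intro x hx
  obtain ⟨R, hR⟩ := hUb.subset_closedBall x
  have hqR : ∀ y ∈ closure U, ‖y - x‖ ^ 2 ≤ R ^ 2 := fun y hy =>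
    pow_le_pow_left₀ (norm_nonneg _)
      (mem_closedBall_iff_norm.1 (closure_minimal hR isClosed_closedBall hy)) 2
  set q : E → ℝ := fun y => ‖y - x‖ ^ 2
  have hq : ContDiff ℝ 2 q := (contDiff_norm_sq ℝ).comp (contDiff_id.sub contDiff_const)
  -- `u - ε q` is strictly superharmonic, `ε q ≤ ε R²` on `closure U`, and `q x = 0`.
  have hpert : ∀ ε > 0, m - ε * R ^ 2 ≤ u x := by
    intro ε hε
    have hmin := le_of_forall_mem_frontier_le_of_laplacian_neg hU hUb (u := u - ε • q)
      (hcont.sub (hq.continuous.continuousOn.const_smul ε)) (hsm.sub (hq.contDiffOn.const_smul ε))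
      (fun y hy => ?_) (m := m - ε * R ^ 2) (fun y hy => ?_) x hx
    · simpa [q] using hmin
    · have hu := (hsm y hy).contDiffAt (hU.mem_nhds hy)
      rw [hu.laplacian_sub (show ContDiffAt ℝ 2 (ε • q) y from hq.contDiffAt.const_smul ε),
        laplacian_smul _ hq.contDiffAt, laplacian_norm_sub_sq, smul_eq_mul]
      have : (0 : ℝ) < finrank ℝ E := Nat.cast_pos.2 finrank_pos
      nlinarith [hΔ y hy]
    · simp only [Pi.sub_apply, Pi.smul_apply, smul_eq_mul]
      nlinarith [hm y hy, hqR y (frontier_subset_closure hy)]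
  have hlim : Tendsto (fun ε : ℝ => m - ε * R ^ 2) (𝓝[>] 0) (𝓝 m) := by
    have : Continuous fun ε : ℝ => m - ε * R ^ 2 := by fun_prop
    simpa using (this.tendsto 0).mono_left nhdsWithin_le_nhds
  exact le_of_tendsto hlim (eventually_nhdsWithin_of_forall hpert)

theorem barrier_le_of_laplacian_le_neg [Nontrivial E] {u : E → ℝ} {P : E} {L a : ℝ}
    (hL : 0 < L) (hcont : ContinuousOn u (closedBall P L)) (hsm : ContDiffOn ℝ 2 u (ball P L))
    (hΔ : ∀ x ∈ ball P L, Δ u x ≤ -a) (hbd : ∀ x ∈ sphere P L, 0 ≤ u x) :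
    ∀ x ∈ closedBall P L, a / (2 * finrank ℝ E) * (L ^ 2 - ‖x - P‖ ^ 2) ≤ u x := by
  set β := a / (2 * finrank ℝ E)
  set q : E → ℝ := fun y => ‖y - P‖ ^ 2
  have hq : ContDiff ℝ 2 q := (contDiff_norm_sq ℝ).comp (contDiff_id.sub contDiff_const)
  have hmin := le_of_forall_mem_frontier_le_of_laplacian_nonpos isOpen_ball isBounded_ball
    (u := u + β • q) (m := β * L ^ 2)
    (by rw [closure_ball P hL.ne']; exact hcont.add (hq.continuous.continuousOn.const_smul β))
    (hsm.add (hq.contDiffOn.const_smul β)) (fun y hy => ?_) (fun y hy => ?_)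
  · intro x hx
    have := hmin x (by rwa [closure_ball P hL.ne'])
    simp only [Pi.add_apply, Pi.smul_apply, smul_eq_mul, q] at this
    linarith
  · have hu := (hsm y hy).contDiffAt (isOpen_ball.mem_nhds hy)
    rw [hu.laplacian_add (show ContDiffAt ℝ 2 (β • q) y from hq.contDiffAt.const_smul β),
      laplacian_smul _ hq.contDiffAt, laplacian_norm_sub_sq, smul_eq_mul]
    have : β * (2 * finrank ℝ E) = a :=
      div_mul_cancel₀ a (by positivity [(finrank_pos : 0 < finrank ℝ E)])
    linarith [hΔ y hy]
  · rw [frontier_ball P hL.ne'] at hy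
    have hyP : ‖y - P‖ = L := mem_sphere_iff_norm.1 hy
    simp only [Pi.add_apply, Pi.smul_apply, smul_eq_mul, q, hyP]
    linarith [hbd y hy]

end Laplacian

theorem HasFDerivWithinAt.two_mul_mul_sq_le_apply_sub {F : Type*} [NormedAddCommGroup F]
    [InnerProductSpace ℝ F] {f : F → ℝ} {f' : F →L[ℝ] ℝ} {P Q : F} {β L : ℝ}
    (hf : HasFDerivWithinAt f f' (closedBall P L) Q) (hQ : ‖Q - P‖ = L) (hfQ : f Q = 0)
    (hlb : ∀ x ∈ closedBall P L, β * (L ^ 2 - ‖x - P‖ ^ 2) ≤ f x) :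
    2 * β * L ^ 2 ≤ f' (P - Q) := by
  set g : F → ℝ := fun x => f x - β * (L ^ 2 - ‖x - P‖ ^ 2)
  have hQmem : Q ∈ closedBall P L := mem_closedBall_iff_norm.2 hQ.le
  have hPmem : P ∈ closedBall P L := mem_closedBall_self (hQ ▸ norm_nonneg _)
  have hgmin : IsMinOn g (closedBall P L) Q := fun x hx => by
    simp only [mem_ofPred_eq, g, hfQ, hQ, sub_self, mul_zero]
    linarith [hlb x hx]
  have hg := hf.sub ((((hasFDerivAt_id Q).sub_const P).norm_sq.const_sub (L ^ 2)).const_mul β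
    ).hasFDerivWithinAt
  have := hgmin.localize.hasFDerivWithinAt_nonneg hg <|
    sub_mem_posTangentConeAt_of_segment_subset <|
      (convex_closedBall P L).segment_subset hQmem hPmem
  simp only [id_eq, ContinuousLinearMap.comp_id, smul_neg, sub_neg_eq_add, add_apply,
    smul_apply, coe_innerSL_apply, nsmul_eq_mul, Nat.cast_ofNat, smul_eq_mul] at this
  have hinner : ⟪Q - P, P - Q⟫ = -L ^ 2 := by
    rw [← neg_sub P Q, inner_neg_left, real_inner_self_eq_norm_sq, norm_sub_rev, hQ]
  rw [hinner] at this
  linarith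

theorem norm_add_smul_inv_smul_sub_sub {F : Type*} [NormedAddCommGroup F] [NormedSpace ℝ F]
    {P Q : F} {L t : ℝ} (hPQ : ‖P - Q‖ = L) (hL : 0 < L) (ht : t ≤ L) :
    ‖Q + t • (L⁻¹ • (P - Q)) - P‖ = L - t := by
  have hcoef : 0 ≤ 1 - t * L⁻¹ := by
    rw [sub_nonneg, ← div_eq_mul_inv, div_le_one hL]
    exact ht
  have : Q + t • (L⁻¹ • (P - Q)) - P = (1 - t * L⁻¹) • (Q - P) := by module
  rw [this, norm_smul, norm_sub_rev Q P, hPQ, Real.norm_of_nonneg hcoef]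
  field_simp

theorem lap_eq_laplacian {c : E2 → ℝ} {p : E2} (hc : ContDiffAt ℝ 2 c p) : lap c p = Δ c p := by
  have hdc : DifferentiableAt ℝ (fderiv ℝ c) p :=
    (hc.fderiv_right (m := 1) le_rfl).differentiableAt one_ne_zero
  rw [laplacian_eq_iteratedFDeriv_orthonormalBasis c (EuclideanSpace.basisFun (Fin 2) ℝ), lap]
  simp [iteratedFDeriv_two_apply, fderiv_clm_apply hdc (differentiableAt_const _)]

theorem IsPoissonSolution.barrier_le {K D L : ℝ} {Ω : Set E2} {c : E2 → ℝ}
    (hc : IsPoissonSolution K D Ω c) (hKD : 0 ≤ K / D) (hL : 0 < L) (hΩ : IsOpen Ω)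
    (hΩb : Bornology.IsBounded Ω) {P : E2} (hball : ball P L ⊆ Ω) :
    ∀ x ∈ closedBall P L, K / (4 * D) * (L ^ 2 - ‖x - P‖ ^ 2) ≤ c x := by
  have hΔ : ∀ p ∈ Ω, Δ c p = -(K / D) := fun p hp =>
    (lap_eq_laplacian ((hc.smooth p hp).contDiffAt (hΩ.mem_nhds hp))).symm.trans (hc.eqn p hp)
  have hnonneg : ∀ x ∈ closure Ω, 0 ≤ c x :=
    le_of_forall_mem_frontier_le_of_laplacian_nonpos hΩ hΩb hc.contOn hc.smooth
      (fun p hp => by rw [hΔ p hp]; exact neg_nonpos.2 hKD) (fun p hp => (hc.bdry p hp).ge)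
  have hclb : closedBall P L ⊆ closure Ω := closure_ball P hL.ne' ▸ closure_mono hball
  intro x hx
  convert barrier_le_of_laplacian_le_neg (a := K / D) hL (hc.contOn.mono hclb)
    (hc.smooth.mono hball) (fun x hx => (hΔ x (hball hx)).le)
    (fun x hx => hnonneg x (hclb (sphere_subset_closedBall hx))) x hx using 2
  rw [finrank_euclideanSpace_fin]
  ring

/-- If the open disc of radius `L` centered at `P` is contained in `Ω`
and `Q ∈ ∂Ω` with `‖P − Q‖ = L`, then along the inward unit direction
`v = (P − Q)/L` a Poisson solution `c` satisfies
`c(Q + t·v) ≥ (K/(4D))·(2Lt − t²)` for `t ∈ [0, L]`; consequently, for any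
gradient `gQ` of the extension of `c` at `Q` (within the closure of `Ω`), the
directional derivative `⟪gQ, v⟫` is at least `(K/(2D))·L`, and in particular
`‖gQ‖ ≥ (K/(2D))·L`. -/
theorem poisson_disc_gradient_bound (K D L : ℝ) (hK : 0 < K) (hD : 0 < D) (hL : 0 < L)
    (Ω : Set E2) (hΩ : IsOpen Ω) (hΩb : Bornology.IsBounded Ω)
    (c : E2 → ℝ) (hc : IsPoissonSolution K D Ω c)
    (P Q : E2) (hball : Metric.ball P L ⊆ Ω) (hQ : Q ∈ frontier Ω) (hPQ : ‖P - Q‖ = L)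
    (v : E2) (hv : v = L⁻¹ • (P - Q)) :
    (∀ t ∈ Set.Icc (0 : ℝ) L, K / (4 * D) * (2 * L * t - t ^ 2) ≤ c (Q + t • v)) ∧
      ∀ gQ : E2, HasGradientWithinAt c gQ (closure Ω) Q →
        K / (2 * D) * L ≤ ⟪gQ, v⟫ ∧ K / (2 * D) * L ≤ ‖gQ‖ := by
  have hbarrier := hc.barrier_le (div_pos hK hD).le hL hΩ hΩb hball
  subst hv
  refine ⟨fun t ht => ?_, fun gQ hg => ?_⟩
  · have hdist := norm_add_smul_inv_smul_sub_sub hPQ hL ht.2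
    have := hbarrier _ (mem_closedBall_iff_norm.2 (by rw [hdist]; linarith [ht.1]))
    rw [hdist] at this
    linarith
  · have hslope := (hg.hasFDerivWithinAt.mono (closure_ball P hL.ne' ▸ closure_mono hball)
      ).two_mul_mul_sq_le_apply_sub (by rwa [norm_sub_rev]) (hc.bdry Q hQ) hbarrier
    rw [InnerProductSpace.toDual_apply_apply] at hslope
    have hinner : K / (2 * D) * L ≤ ⟪gQ, L⁻¹ • (P - Q)⟫ := by
      rw [real_inner_smul_right, le_inv_mul_iff₀ hL]
      calc L * (K / (2 * D) * L) = 2 * (K / (4 * D)) * L ^ 2 := by ring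
        _ ≤ ⟪gQ, P - Q⟫ := hslope
    have hunit : ‖L⁻¹ • (P - Q)‖ = 1 := by
      rw [norm_smul, hPQ, norm_inv, Real.norm_of_nonneg hL.le, inv_mul_cancel₀ hL.ne']
    refine ⟨hinner, hinner.trans ?_⟩
    simpa [hunit] using real_inner_le_norm gQ (L⁻¹ • (P - Q))
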